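/- arXiv:1808.01289 — 3 statements merged into one kernel-verified Lean document; each statement's English description precedes it below -/
import Mathlib

section
/- Let p be a prime and n ≥ 1. Let B := R₂[t₁,…,t_n] be a polynomial ring over R₂ and let h ∈ B be an element with h ∉ pB. Let A be the localization of B away from h, let τ₁,…,τ_n denote the images of t₁,…,t_n in A, and let d : A → Ω_{A/R₂} be the universal derivation. Then there exist NO ring endomorphism φ : A → A and matrix λ = (λ_{ij}) of size n×n with entries in R₂ such that simultaneously: (a) φ(r·1) = σ(r)·1 for every r ∈ R₂; (b) φ(a) − a^p ∈ pA for every a ∈ A; and (c) for every i, d(φ(τᵢ)) = Σⱼ (p·λ_{ij}) · d(τⱼ) in Ω_{A/R₂}. (This is the mod p² formulation of the statement that no nonempty open subset of a power of the additive group 𝔾_a over R admits a Frobenius lift on its p-adic completion that is Lie invariant mod p.) -/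
open MvPolynomial

set_option synthInstance.maxHeartbeats 2000000
set_option maxHeartbeats 2000000

/-- `R₂ = W(k)/p²W(k)`. -/
abbrev Rtwo (p : ℕ) [Fact p.Prime] (k : Type) [CommRing k] : Type :=
  WittVector p k ⧸ Ideal.span {((p : WittVector p k)) ^ 2}

/-- The endomorphism `σ` of `R₂` induced by the Witt vector Frobenius. -/
noncomputable def sigmaTwo (p : ℕ) [Fact p.Prime] (k : Type) [CommRing k] :
    Rtwo p k →+* Rtwo p k :=
  Ideal.quotientMap _ WittVector.frobenius (by
    rw [Ideal.span_singleton_le_iff_mem, Ideal.mem_comap, map_pow, map_natCast]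
    exact Ideal.subset_span rfl)

/-- The image `τᵢ` in `A` (the localization of `B = R₂[t₁,…,t_n]` away from `h`) of the
variable `tᵢ`. -/
noncomputable def tauCoord (p : ℕ) [Fact p.Prime] (k : Type) [CommRing k] (n : ℕ)
    (h : MvPolynomial (Fin n) (Rtwo p k)) (i : Fin n) : Localization.Away h :=
  algebraMap (MvPolynomial (Fin n) (Rtwo p k)) (Localization.Away h) (X i)


/-!
Let `D` be the `R₂`-derivation of `A` extending `∂/∂t₁` (it exists because `A` is étale
over `B`). By (b), `φ(τ₁) = τ₁ ^ p + p u`, and applying `D` to (c) for `i = 1` gives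
`p (τ₁ ^ (p - 1) + D u - λ₁₁) = 0`. The `p`-torsion of `A` lies in `pA` (it does in `R₂`,
hence in `B` and in its localization `A`), so `τ₁ ^ (p - 1) + D u - λ₁₁ ∈ pA`, and applying
`D ^ (p - 1)` yields `(p - 1)! + D ^ p u ∈ pA`. But `D ^ p ≡ 0 mod p` on `A`: modulo `p` the
Leibniz rule for `D ^ p` keeps only its two extreme terms, so `{a | D ^ p a ∈ pA}` is a
subalgebra closed under inverses, and it contains every `τⱼ` because `D τⱼ` is constant.
Hence `(p - 1)! ∈ pA`, so `pA = A`, whereas `pA` is a prime ideal because `pB` is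
(`R₂ / p = k`) and `h ∉ pB`.
-/

theorem Ideal.Quotient.mem_span_mk_of_mk_mul_eq_zero {W : Type*} [CommRing W] [IsDomain W]
    {q : W} (hq : q ≠ 0) {y : W ⧸ Ideal.span {q ^ 2}} (hy : Ideal.Quotient.mk _ q * y = 0) :
    y ∈ Ideal.span {Ideal.Quotient.mk _ q} := by
  obtain ⟨x, rfl⟩ := Ideal.Quotient.mk_surjective y
  rw [← map_mul, Ideal.Quotient.eq_zero_iff_mem, Ideal.mem_span_singleton] at hy
  obtain ⟨z, hz⟩ := hy
  have hx : x = q * z := mul_left_cancel₀ hq (by rw [hz]; ring)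
  rw [hx, map_mul]
  exact Ideal.mul_mem_right _ _ (Ideal.mem_span_singleton_self _)

theorem Prime.mk_span_sq {W : Type*} [CommRing W] [IsDomain W] {q : W} (hq : Prime q) :
    Prime (Ideal.Quotient.mk (Ideal.span {q ^ 2}) q) := by
  have hne : Ideal.Quotient.mk (Ideal.span {q ^ 2}) q ≠ 0 := by
    rw [Ne, Ideal.Quotient.eq_zero_iff_mem, Ideal.mem_span_singleton]
    intro h
    have := (pow_dvd_pow_iff hq.ne_zero hq.not_isUnit).mp (by simpa using h : q ^ 2 ∣ q ^ 1)
    omega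
  have hmap : Ideal.map (Ideal.Quotient.mk _) (Ideal.span {q}) =
      Ideal.span {Ideal.Quotient.mk (Ideal.span {q ^ 2}) q} := by
    rw [Ideal.map_span, Set.image_singleton]
  rw [← Ideal.span_singleton_prime hne, ← hmap]
  have := (Ideal.span_singleton_prime hq.ne_zero).mpr hq
  refine Ideal.map_isPrime_of_surjective Ideal.Quotient.mk_surjective ?_
  rw [Ideal.mk_ker, Ideal.span_singleton_le_span_singleton]
  exact dvd_pow_self q two_ne_zero

theorem MvPolynomial.mem_span_C_of_C_mul_eq_zero {R σ : Type*} [CommRing R] {r : R}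
    (hr : ∀ x : R, r * x = 0 → x ∈ Ideal.span {r}) {f : MvPolynomial σ R} (hf : C r * f = 0) :
    f ∈ Ideal.span {C r} := by
  rw [← Set.image_singleton, ← Ideal.map_span, mem_map_C_iff]
  intro m
  apply hr
  simpa using congrArg (coeff m) hf

theorem IsLocalization.mem_span_algebraMap_of_mul_eq_zero {S T : Type*} [CommRing S] [CommRing T]
    [Algebra S T] (M : Submonoid S) [IsLocalization M T] {r : S}
    (hr : ∀ x : S, r * x = 0 → x ∈ Ideal.span {r}) {y : T} (hy : algebraMap S T r * y = 0) :
    y ∈ Ideal.span {algebraMap S T r} := by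
  obtain ⟨x, s, rfl⟩ := IsLocalization.exists_mk'_eq M y
  rw [IsLocalization.mul_mk'_eq_mk'_of_mul, IsLocalization.mk'_eq_zero_iff] at hy
  obtain ⟨c, hc⟩ := hy
  obtain ⟨z, hz⟩ := Ideal.mem_span_singleton'.mp (hr (c * x) (by linear_combination hc))
  rw [← IsLocalization.mk'_cancel x s c, mul_comm x, ← hz, mul_comm z,
    ← IsLocalization.mul_mk'_eq_mk'_of_mul]
  exact Ideal.mul_mem_right _ _ (Ideal.mem_span_singleton_self _)

theorem IsLocalization.Away.isPrime_span_algebraMap {S T : Type*} [CommRing S] [CommRing T]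
    [Algebra S T] {h : S} [IsLocalization.Away h T] {r : S} (hr : (Ideal.span {r}).IsPrime)
    (hh : h ∉ Ideal.span {r}) : (Ideal.span {algebraMap S T r}).IsPrime := by
  have hdisj : Disjoint (Submonoid.powers h : Set S) (Ideal.span {r}) :=
    Set.disjoint_left.mpr <| by
      rintro _ ⟨m, rfl⟩ hmem
      exact hh (hr.mem_of_pow_mem m hmem)
  simpa [Ideal.map_span] using IsLocalization.isPrime_of_isPrime_disjoint _ T _ hr hdisj

theorem IsLocalization.mem_of_algebraMap_mem {S T : Type*} [CommRing S] [CommRing T] [Algebra S T]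
    (M : Submonoid S) [IsLocalization M T] (K : Subring T) (hS : ∀ s, algebraMap S T s ∈ K)
    (hinv : ∀ u v : T, u * v = 1 → u ∈ K → v ∈ K) (a : T) : a ∈ K := by
  obtain ⟨b, s, rfl⟩ := IsLocalization.exists_mk'_eq M a
  rw [IsLocalization.mk'_eq_mul_mk'_one]
  exact K.mul_mem (hS b) (hinv _ _ (IsLocalization.mk'_spec' T 1 s ▸ by simp) (hS s))

theorem Ideal.natCast_factorial_pred_notMem {A : Type*} [CommRing A] {I : Ideal A} (hI : I ≠ ⊤)
    {p : ℕ} (hp : p.Prime) (hpI : (p : A) ∈ I) : ((p - 1).factorial : A) ∉ I := by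
  intro hfac
  have hcop : Nat.Coprime p (p - 1).factorial :=
    (Nat.Prime.coprime_iff_not_dvd hp).mpr (by rw [hp.dvd_factorial]; have := hp.pos; omega)
  obtain ⟨a, b, hab⟩ := (Nat.isCoprime_iff_coprime.mpr hcop).map (Int.castRingHom A)
  apply hI
  rw [Ideal.eq_top_iff_one, ← hab]
  simp only [eq_intCast, Int.cast_natCast]
  exact add_mem (I.mul_mem_left _ hpI) (I.mul_mem_left _ hfac)

open TensorProduct in
theorem Derivation.exists_extend_of_formallyEtale {R S T : Type*} [CommRing R] [CommRing S]
    [CommRing T] [Algebra R S] [Algebra R T] [Algebra S T] [IsScalarTower R S T]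
    [Algebra.FormallyEtale S T] (D : Derivation R S S) :
    ∃ D' : Derivation R T T, ∀ s, D' (algebraMap S T s) = algebraMap S T (D s) := by
  let f : Ω[T⁄R] →ₗ[T] T := (AlgebraTensorModule.rid S T T).toLinearMap ∘ₗ
    D.liftKaehlerDifferential.baseChange T ∘ₗ
    (KaehlerDifferential.tensorKaehlerEquivOfFormallyEtale R S T).symm.toLinearMap
  refine ⟨f.compDer (KaehlerDifferential.D R T), fun s ↦ ?_⟩
  simp [f, KaehlerDifferential.tensorKaehlerEquivOfFormallyEtale_symm_D_algebraMap,
    ← Algebra.algebraMap_eq_smul_one]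

namespace Derivation

open Finset

variable {R A : Type*} [CommRing R] [CommRing A] [Algebra R A] (D : Derivation R A A)

theorem iterate_mul (n : ℕ) (a b : A) :
    D^[n] (a * b) = ∑ ij ∈ antidiagonal n, n.choose ij.1 • (D^[ij.1] a * D^[ij.2] b) := by
  induction n with
  | zero => simp
  | succ n ih =>
    rw [sum_antidiagonal_choose_succ_nsmul (M := A) (fun i j => D^[i] a * D^[j] b) n]
    simp only [Function.iterate_succ_apply', ih, map_sum, map_nsmul, leibniz, smul_eq_mul,
      smul_add, sum_add_distrib]
    congr 1
    refine sum_congr rfl fun ⟨i, j⟩ hij ↦ ?_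
    rw [n.choose_symm_of_eq_add (mem_antidiagonal.1 hij).symm, mul_comm]

theorem iterate_algebraMap {m : ℕ} (hm : m ≠ 0) (r : R) : D^[m] (algebraMap R A r) = 0 := by
  obtain ⟨m, rfl⟩ := Nat.exists_eq_succ_of_ne_zero hm
  rw [Function.iterate_succ_apply, map_algebraMap, iterate_map_zero]

theorem iterate_one {m : ℕ} (hm : m ≠ 0) : D^[m] (1 : A) = 0 := by
  simpa using D.iterate_algebraMap hm 1

theorem iterate_natCast_mul (m q : ℕ) (a : A) : D^[m] (q * a) = q * D^[m] a := by
  simp only [← nsmul_eq_mul, iterate_map_nsmul]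

theorem iterate_pow_self {x : A} (hx : D x = 1) (m : ℕ) : D^[m] (x ^ m) = m.factorial := by
  induction m with
  | zero => simp
  | succ m ih =>
    rw [Function.iterate_succ_apply, leibniz_pow, hx, smul_eq_mul, mul_one, Nat.add_sub_cancel,
      nsmul_eq_mul, iterate_natCast_mul, ih, Nat.factorial_succ, Nat.cast_mul]

variable (p : ℕ) [hp : Fact p.Prime]

theorem iterate_prime_mul (a b : A) :
    Ideal.Quotient.mk (Ideal.span {(p : A)}) (D^[p] (a * b)) =
      Ideal.Quotient.mk _ (a * D^[p] b + D^[p] a * b) := by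
  have hp0 : (p : A ⧸ Ideal.span {(p : A)}) = 0 := by
    rw [← _root_.map_natCast (Ideal.Quotient.mk _), Ideal.Quotient.eq_zero_iff_mem]
    exact Ideal.mem_span_singleton_self _
  rw [iterate_mul, map_sum, sum_eq_add_of_mem (0, p) (p, 0) (by simp) (by simp)
    (by simp [hp.out.ne_zero])]
  · simp [add_comm]
  · rintro ⟨i, j⟩ hij hne
    have hi : i ≠ 0 := by rintro rfl; simp_all
    have hip : i < p := by
      have := mem_antidiagonal.1 hij
      have : j ≠ 0 := by rintro rfl; simp_all
      omega
    obtain ⟨c, hc⟩ := hp.out.dvd_choose_self hi hip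
    rw [map_nsmul, hc, nsmul_eq_mul, Nat.cast_mul, hp0, zero_mul, zero_mul]

def iterateModSubalgebra : Subalgebra R A where
  carrier := {a | D^[p] a ∈ Ideal.span {(p : A)}}
  mul_mem' {a b} ha hb := by
    rw [Set.mem_ofPred_eq, ← Ideal.Quotient.eq_zero_iff_mem, iterate_prime_mul,
      Ideal.Quotient.eq_zero_iff_mem]
    exact add_mem (Ideal.mul_mem_left _ _ hb) (Ideal.mul_mem_right _ _ ha)
  add_mem' {a b} ha hb := by
    rw [Set.mem_ofPred_eq, iterate_map_add]
    exact add_mem ha hb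
  algebraMap_mem' r := by
    rw [Set.mem_ofPred_eq, D.iterate_algebraMap hp.out.ne_zero]
    exact zero_mem _

theorem mem_iterateModSubalgebra {a : A} :
    a ∈ D.iterateModSubalgebra p ↔ D^[p] a ∈ Ideal.span {(p : A)} := Iff.rfl

theorem mem_iterateModSubalgebra_of_mul_eq_one {u v : A} (huv : u * v = 1)
    (hu : u ∈ D.iterateModSubalgebra p) : v ∈ D.iterateModSubalgebra p := by
  rw [mem_iterateModSubalgebra, ← Ideal.Quotient.eq_zero_iff_mem] at hu ⊢
  have h1 := D.iterate_prime_mul p u v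
  rw [huv, D.iterate_one hp.out.ne_zero, map_zero, map_add, map_mul, map_mul, hu, zero_mul,
    add_zero] at h1
  have := congrArg (Ideal.Quotient.mk (Ideal.span {(p : A)}) v * ·) h1
  simpa [← mul_assoc, ← map_mul, mul_comm v u, huv] using this.symm

theorem aeval_mem_iterateModSubalgebra {σ : Type*} (x : σ → A) (hx : ∀ j, D (D (x j)) = 0)
    (f : MvPolynomial σ R) : aeval x f ∈ D.iterateModSubalgebra p := by
  suffices Algebra.adjoin R (Set.range x) ≤ D.iterateModSubalgebra p from
    this (Algebra.adjoin_range_eq_range_aeval R x ▸ (aeval x).mem_range_self f)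
  rw [Algebra.adjoin_le_iff]
  rintro _ ⟨j, rfl⟩
  rw [SetLike.mem_coe, D.mem_iterateModSubalgebra, ← Nat.sub_add_cancel hp.out.two_le,
    Function.iterate_add_apply]
  simp [hx]

theorem iterate_prime_mem_span_of_isLocalization {σ : Type*} [Algebra (MvPolynomial σ R) A]
    [IsScalarTower R (MvPolynomial σ R) A] (M : Submonoid (MvPolynomial σ R))
    [IsLocalization M A] (hD : ∀ j, D (D (algebraMap (MvPolynomial σ R) A (X j))) = 0)
    (a : A) : D^[p] a ∈ Ideal.span {(p : A)} := by
  refine IsLocalization.mem_of_algebraMap_mem M (D.iterateModSubalgebra p).toSubring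
    (fun b ↦ ?_) (fun u v huv hu ↦ D.mem_iterateModSubalgebra_of_mul_eq_one p huv hu) a
  rw [← IsScalarTower.toAlgHom_apply R, aeval_unique (IsScalarTower.toAlgHom R _ A)]
  exact D.aeval_mem_iterateModSubalgebra p _ hD b

theorem natCast_factorial_pred_mem_span
    (htors : ∀ y : A, (p : A) * y = 0 → y ∈ Ideal.span {(p : A)})
    (hDp : ∀ a, D^[p] a ∈ Ideal.span {(p : A)}) {x u : A} {c : R} (hx : D x = 1)
    (hc : D (x ^ p + p * u) = p * algebraMap R A c) :
    ((p - 1).factorial : A) ∈ Ideal.span {(p : A)} := by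
  have hp1 : p - 1 ≠ 0 := by have := hp.out.two_le; omega
  have hy : x ^ (p - 1) + D u - algebraMap R A c ∈ Ideal.span {(p : A)} := by
    refine htors _ ?_
    rw [map_add, leibniz_pow, hx, smul_eq_mul, mul_one, ← nsmul_eq_mul (p : ℕ) u, map_nsmul,
      nsmul_eq_mul, nsmul_eq_mul] at hc
    linear_combination hc
  obtain ⟨v, hv⟩ := Ideal.mem_span_singleton'.mp hy
  have hv' := congrArg D^[p - 1] hv
  rw [mul_comm, iterate_natCast_mul, iterate_map_sub, iterate_map_add, iterate_pow_self D hx,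
    ← Function.iterate_succ_apply, Nat.succ_eq_add_one, Nat.sub_add_cancel hp.out.one_le,
    iterate_algebraMap D hp1, sub_zero] at hv'
  rw [show ((p - 1).factorial : A) = p * D^[p - 1] v - D^[p] u by rw [hv']; ring]
  exact sub_mem (Ideal.mul_mem_right _ _ (Ideal.mem_span_singleton_self _)) (hDp u)

end Derivation

namespace Rtwo

variable (p : ℕ) [Fact p.Prime] (k : Type) [Field k] [CharP k p]

theorem mem_span_natCast_of_natCast_mul_eq_zero {x : Rtwo p k} (hx : (p : Rtwo p k) * x = 0) :
    x ∈ Ideal.span {(p : Rtwo p k)} := by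
  simpa using Ideal.Quotient.mem_span_mk_of_mk_mul_eq_zero (WittVector.p_nonzero p k)
    (by simpa using hx)

theorem prime_natCast [PerfectRing k p] : Prime (p : Rtwo p k) := by
  simpa using (WittVector.irreducible p (k := k)).prime.mk_span_sq

variable {σ : Type*} (h : MvPolynomial σ (Rtwo p k))

theorem mem_span_natCast_localizationAway_of_natCast_mul_eq_zero {y : Localization.Away h}
    (hy : (p : Localization.Away h) * y = 0) : y ∈ Ideal.span {(p : Localization.Away h)} := by
  have htors (f : MvPolynomial σ (Rtwo p k)) (hf : (p : MvPolynomial σ (Rtwo p k)) * f = 0) :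
      f ∈ Ideal.span {(p : MvPolynomial σ (Rtwo p k))} := by
    simpa using mem_span_C_of_C_mul_eq_zero
      (fun _ ↦ mem_span_natCast_of_natCast_mul_eq_zero p k) (by simpa using hf)
  simpa using IsLocalization.mem_span_algebraMap_of_mul_eq_zero (.powers h) htors
    (by simpa using hy)

theorem isPrime_span_natCast_localizationAway [PerfectRing k p]
    (hh : h ∉ Ideal.span {(p : MvPolynomial σ (Rtwo p k))}) :
    (Ideal.span {(p : Localization.Away h)}).IsPrime := by
  have hprime : Prime (p : MvPolynomial σ (Rtwo p k)) := by
    simpa using (prime_C_iff σ).mpr (prime_natCast p k)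
  simpa using IsLocalization.Away.isPrime_span_algebraMap (T := Localization.Away h)
    ((Ideal.span_singleton_prime hprime.ne_zero).mpr hprime) hh

end Rtwo

/-- There is no Frobenius lift on any basic open of a power `𝔾_a^n` of the additive group
over `R₂` that is Lie invariant mod `p` (mod-`p²` formulation). -/
theorem no_lie_invariant_frobenius_lift_Ga_pow (p : ℕ) [Fact p.Prime]
    (k : Type) [Field k] [IsAlgClosed k] [CharP k p]
    (n : ℕ) (hn : 1 ≤ n)
    (h : MvPolynomial (Fin n) (Rtwo p k))
    (hh : h ∉ Ideal.span {(p : MvPolynomial (Fin n) (Rtwo p k))}) :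
    ¬ ∃ (φ : Localization.Away h →+* Localization.Away h)
        (lam : Fin n → Fin n → Rtwo p k),
      -- (a) `φ` lifts `σ` on `R₂`
      (∀ r : Rtwo p k,
        φ (algebraMap (Rtwo p k) (Localization.Away h) r) =
          algebraMap (Rtwo p k) (Localization.Away h) (sigmaTwo p k r)) ∧
      -- (b) `φ` is a Frobenius lift
      (∀ a : Localization.Away h, φ a - a ^ p ∈ Ideal.span {(p : Localization.Away h)}) ∧
      -- (c) Lie invariance mod `p` (formulated mod `p²`)
      (∀ i : Fin n,
        KaehlerDifferential.D (Rtwo p k) (Localization.Away h) (φ (tauCoord p k n h i)) =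
          ∑ j : Fin n,
            algebraMap (Rtwo p k) (Localization.Away h) ((p : Rtwo p k) * lam i j) •
              KaehlerDifferential.D (Rtwo p k) (Localization.Away h) (tauCoord p k n h j)) := by
  rintro ⟨φ, lam, -, hfrob, hlie⟩
  let i₀ : Fin n := ⟨0, hn⟩
  have := Algebra.FormallyEtale.of_isLocalization (Rₘ := Localization.Away h) (.powers h)
  obtain ⟨D, hD⟩ := (pderiv i₀ : Derivation (Rtwo p k) _ _).exists_extend_of_formallyEtale
    (T := Localization.Away h)
  have hDτ (j : Fin n) : D (tauCoord p k n h j) = if j = i₀ then 1 else 0 := by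
    rw [tauCoord, hD, pderiv_X, Pi.single_apply]
    split_ifs <;> simp
  have hDφ : D (φ (tauCoord p k n h i₀)) = p * algebraMap _ _ (lam i₀ i₀) := by
    simpa [hDτ] using congrArg D.liftKaehlerDifferential (hlie i₀)
  obtain ⟨u, hu⟩ := Ideal.mem_span_singleton'.mp (hfrob (tauCoord p k n h i₀))
  refine Ideal.natCast_factorial_pred_notMem
    (Rtwo.isPrime_span_natCast_localizationAway p k h hh).ne_top Fact.out
    (Ideal.mem_span_singleton_self _)
    (D.natCast_factorial_pred_mem_span p (u := u) (c := lam i₀ i₀) ?_ ?_ (hDτ i₀) ?_)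
  · exact fun _ ↦ Rtwo.mem_span_natCast_localizationAway_of_natCast_mul_eq_zero p k h
  · exact D.iterate_prime_mem_span_of_isLocalization p (.powers h) fun j ↦ by
      rw [← tauCoord, hDτ]
      split_ifs <;> simp
  · rwa [mul_comm, hu, add_sub_cancel]
end

section
/- Let p be a prime, N ≥ 1, and let u be an N×N matrix over ℤ_p with (u−1)^p = 0. Then E_p(L_p(u)) = u. -/
/-!
Both sides are values at `x = u - 1` of polynomials over `ℤ_[p]`, so it suffices that
`E(L(X)) ≡ 1 + X mod X^p` over any commutative ring in which `(p - 1)!` is a unit.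
Put `F = E ∘ L`. Since `(1 + X) L' = 1 - (-X)^(p-1)` and `E'` is `E` truncated one degree lower,
`F` satisfies `(1 + X) F' ≡ F mod X^(p-1)`, and so does `1 + X`. The coefficients of a solution of
this congruence obey `(k + 1) f_(k+1) = (1 - k) f_k` for `k < p - 1`, so two solutions with the same
constant term agree modulo `X^p`.
-/

open Polynomial Finset Nat

/-- The truncated exponential `E_p(M) = Σ_{k=0}^{p-1} (k!)⁻¹ M^k`. -/
noncomputable def truncExp (p : ℕ) [Fact p.Prime] {N : ℕ}
    (M : Matrix (Fin N) (Fin N) ℤ_[p]) : Matrix (Fin N) (Fin N) ℤ_[p] :=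
  ∑ k ∈ Finset.range p, Ring.inverse ((k.factorial : ℤ_[p])) • M ^ k

/-- The truncated logarithm `L_p(u) = Σ_{k=1}^{p-1} (-1)^{k+1} k⁻¹ (u-1)^k`. -/
noncomputable def truncLog (p : ℕ) [Fact p.Prime] {N : ℕ}
    (u : Matrix (Fin N) (Fin N) ℤ_[p]) : Matrix (Fin N) (Fin N) ℤ_[p] :=
  ∑ k ∈ Finset.Icc 1 (p - 1),
    ((-1 : ℤ_[p]) ^ (k + 1) * Ring.inverse (k : ℤ_[p])) • (u - 1) ^ k

theorem IsUnit.natCast_of_natCast_factorial {A : Type*} [CommSemiring A] {n m : ℕ}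
    (h : IsUnit (n ! : A)) (hm : 0 < m) (hmn : m ≤ n) : IsUnit (m : A) :=
  isUnit_of_dvd_unit (Nat.cast_dvd_cast (Nat.dvd_factorial hm hmn)) h

theorem Ring.inverse_natCast_factorial_succ_mul {A : Type*} [CommSemiring A] {k : ℕ}
    (h : IsUnit ((k + 1)! : A)) :
    Ring.inverse ((k + 1)! : A) * (k + 1 : ℕ) = Ring.inverse (k ! : A) := by
  rw [Nat.factorial_succ, Nat.cast_mul, Ring.mul_inverse_rev, Ring.inverse_mul_cancel_right]
  exact h.natCast_of_natCast_factorial k.succ_pos le_rfl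

section TruncatedSeries

variable (R : Type*) [CommRing R]

-- `Ring.inverse` is `0` off the units: these are the intended truncations once `(n - 1)!` is a unit.
noncomputable def truncExpPoly (n : ℕ) : R[X] :=
  ∑ k ∈ range n, Ring.inverse (k ! : R) • X ^ k

noncomputable def truncLogPoly (n : ℕ) : R[X] :=
  ∑ k ∈ Icc 1 (n - 1), ((-1) ^ (k + 1) * Ring.inverse (k : R)) • X ^ k

variable {R}

theorem truncExpPoly_succ (n : ℕ) :
    truncExpPoly R (n + 1) = truncExpPoly R n + Ring.inverse (n ! : R) • X ^ n :=
  sum_range_succ _ _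

theorem truncExpPoly_succ_coeff_zero (n : ℕ) : (truncExpPoly R (n + 1)).coeff 0 = 1 := by
  simp [truncExpPoly, coeff_X_pow]

theorem derivative_truncExpPoly_succ {n : ℕ} (h : IsUnit (n ! : R)) :
    derivative (truncExpPoly R (n + 1)) = truncExpPoly R n := by
  rw [truncExpPoly, sum_range_succ', derivative_add, derivative_sum]
  simp only [pow_zero, derivative_smul, derivative_one, smul_zero, add_zero, derivative_X_pow,
    add_tsub_cancel_right, truncExpPoly]
  refine sum_congr rfl fun k hk => ?_
  rw [← smul_eq_C_mul, smul_smul,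
    Ring.inverse_natCast_factorial_succ_mul (h.natCast_factorial_of_le (mem_range.mp hk))]

theorem X_dvd_truncLogPoly (n : ℕ) : X ∣ truncLogPoly R n :=
  dvd_sum fun k hk => by
    rw [smul_eq_C_mul]
    exact dvd_mul_of_dvd_right (dvd_pow_self X (Nat.one_le_iff_ne_zero.mp (mem_Icc.mp hk).1)) _

theorem derivative_truncLogPoly_succ {n : ℕ} (h : IsUnit (n ! : R)) :
    derivative (truncLogPoly R (n + 1)) = ∑ i ∈ range n, (-X) ^ i := by
  rw [truncLogPoly, add_tsub_cancel_right, ← Ico_add_one_right_eq_Icc, sum_Ico_eq_sum_range,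
    add_tsub_cancel_right, derivative_sum]
  refine sum_congr rfl fun k hk => ?_
  have hunit : IsUnit ((1 + k : ℕ) : R) :=
    h.natCast_of_natCast_factorial (by omega) (by have := mem_range.mp hk; omega)
  rw [derivative_smul, derivative_X_pow, ← smul_eq_C_mul, smul_smul, mul_assoc,
    Ring.inverse_mul_cancel _ hunit, mul_one, add_tsub_cancel_left, neg_pow (X : R[X]),
    smul_eq_C_mul]
  simp [pow_add]

theorem one_add_X_mul_derivative_truncLogPoly_succ {n : ℕ} (h : IsUnit (n ! : R)) :
    (1 + X) * derivative (truncLogPoly R (n + 1)) = 1 - (-X) ^ n := by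
  rw [derivative_truncLogPoly_succ h, ← mul_neg_geom_sum, sub_neg_eq_add]

theorem X_pow_succ_dvd_of_X_pow_dvd_one_add_X_mul_derivative_sub {f : R[X]} {m : ℕ}
    (hm : IsUnit (m ! : R)) (h0 : f.coeff 0 = 0) (h : X ^ m ∣ (1 + X) * derivative f - f) :
    X ^ (m + 1) ∣ f := by
  rw [X_pow_dvd_iff] at h ⊢
  intro d hd
  induction d with
  | zero => exact h0
  | succ d ih =>
    have hXf : (X * derivative f).coeff d = f.coeff d * d := by
      cases d <;> simp [coeff_X_mul, coeff_derivative]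
    have hcoeff := h d (by omega)
    rw [coeff_sub, add_mul, one_mul, coeff_add, hXf, coeff_derivative, ih (by omega), zero_mul,
      add_zero, sub_zero] at hcoeff
    have hunit : IsUnit ((d : R) + 1) := by
      exact_mod_cast hm.natCast_of_natCast_factorial d.succ_pos (by omega)
    exact hunit.mul_left_eq_zero.mp hcoeff

theorem X_pow_dvd_truncExpPoly_comp_truncLogPoly_sub {n : ℕ} (h : IsUnit ((n - 1)! : R)) :
    X ^ n ∣ (truncExpPoly R n).comp (truncLogPoly R n) - (1 + X) := by
  obtain _ | n := n
  · simp
  rw [add_tsub_cancel_right] at h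
  set L := truncLogPoly R (n + 1)
  set G := (truncExpPoly R n).comp L
  have hXL : X ∣ L := X_dvd_truncLogPoly _
  have hF : (truncExpPoly R (n + 1)).comp L = G + C (Ring.inverse (n ! : R)) * L ^ n := by
    rw [truncExpPoly_succ, add_comp, smul_comp, X_pow_comp, smul_eq_C_mul]
  have hF0 : ((truncExpPoly R (n + 1)).comp L - (1 + X)).coeff 0 = 0 := by
    rw [coeff_sub, coeff_zero_eq_eval_zero, eval_comp, ← coeff_zero_eq_eval_zero L,
      X_dvd_iff.mp hXL, ← coeff_zero_eq_eval_zero, truncExpPoly_succ_coeff_zero]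
    simp
  have hODE : (1 + X) * derivative ((truncExpPoly R (n + 1)).comp L - (1 + X)) -
      ((truncExpPoly R (n + 1)).comp L - (1 + X)) =
      -((-X) ^ n * G) - C (Ring.inverse (n ! : R)) * L ^ n := by
    rw [derivative_sub, derivative_comp, derivative_truncExpPoly_succ h, hF]
    simp only [derivative_add, derivative_one, derivative_X, zero_add]
    linear_combination G * one_add_X_mul_derivative_truncLogPoly_succ h
  refine X_pow_succ_dvd_of_X_pow_dvd_one_add_X_mul_derivative_sub h hF0 ?_
  rw [hODE]
  exact dvd_sub (dvd_neg.mpr (dvd_mul_of_dvd_left (pow_dvd_pow_of_dvd (dvd_neg.mpr dvd_rfl) n) _))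
    (dvd_mul_of_dvd_right (pow_dvd_pow_of_dvd hXL n) _)

variable {A : Type*} [Ring A] [Algebra R A]

theorem aeval_truncExpPoly (x : A) (n : ℕ) :
    aeval x (truncExpPoly R n) = ∑ k ∈ range n, Ring.inverse (k ! : R) • x ^ k := by
  simp [truncExpPoly]

theorem aeval_truncLogPoly (x : A) (n : ℕ) :
    aeval x (truncLogPoly R n) =
      ∑ k ∈ Icc 1 (n - 1), ((-1) ^ (k + 1) * Ring.inverse (k : R)) • x ^ k := by
  simp [truncLogPoly]

theorem aeval_truncExpPoly_aeval_truncLogPoly {n : ℕ} (h : IsUnit ((n - 1)! : R)) {x : A}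
    (hx : x ^ n = 0) : aeval (aeval x (truncLogPoly R n)) (truncExpPoly R n) = 1 + x := by
  have h1X : aeval x (1 + X : R[X]) = 1 + x := by simp
  rw [← aeval_comp, ← sub_eq_zero, ← h1X, ← map_sub]
  exact aeval_eq_zero_of_dvd_aeval_eq_zero (X_pow_dvd_truncExpPoly_comp_truncLogPoly_sub h)
    (by rw [map_pow, aeval_X, hx])

end TruncatedSeries

theorem PadicInt.isUnit_natCast_factorial_iff {p : ℕ} [Fact p.Prime] {n : ℕ} :
    IsUnit (n ! : ℤ_[p]) ↔ n < p := by
  rw [PadicInt.isUnit_iff, PadicInt.norm_natCast_eq_one_iff,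
    Nat.Prime.coprime_iff_not_dvd Fact.out, Nat.Prime.dvd_factorial Fact.out, not_le]

theorem truncExp_truncLog_general (p : ℕ) [Fact p.Prime] (N : ℕ)
    (u : Matrix (Fin N) (Fin N) ℤ_[p]) (hu : (u - 1) ^ p = 0) :
    truncExp p (truncLog p u) = u := by
  have hcomp := aeval_truncExpPoly_aeval_truncLogPoly
    (PadicInt.isUnit_natCast_factorial_iff.mpr (Nat.sub_lt (Fact.out : p.Prime).pos one_pos)) hu
  rw [aeval_truncLogPoly, aeval_truncExpPoly, add_sub_cancel] at hcomp
  exact hcomp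

/-- If `(u-1)^p = 0` then `E_p(L_p(u)) = u`. -/
theorem truncExp_truncLog (p : ℕ) [Fact p.Prime] (N : ℕ) (hN : 1 ≤ N)
    (u : Matrix (Fin N) (Fin N) ℤ_[p]) (hu : (u - 1) ^ p = 0) :
    truncExp p (truncLog p u) = u :=
  truncExp_truncLog_general p N u hu
end

section
/- Let p be a prime, N ≥ 1, and let β be an N×N matrix over ℤ_p with β^p = 0. Then E_p(β)·E_p(−β) = 1 (so E_p(β) is invertible), and for every natural number m one has E_p(m·β) = (E_p(β))^m. -/
/-!
For `x` in an algebra over a commutative ring in which `1!, …, (n-1)!` are units and with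
`x ^ n = 0`, the truncated exponential `E(x) = ∑_{k<n} x^k / k!` satisfies
`E(a x) E(b x) = E((a + b) x)`. The two sides are values at `x` of polynomials in `X`
whose coefficients below degree `n` agree by the binomial theorem, so their difference is
divisible by `X ^ n` and vanishes at `x`. Both claims follow by taking `b = -a`, resp. by
induction on `m`; over `ℤ_[p]` with `n = p` the factorials `k!`, `k < p`, are prime to `p`.
-/

open Finset Polynomial
open scoped Nat Ring

theorem Ring.inverse_factorial_mul_inverse_factorial {R : Type*} [CommRing R] {i j : ℕ}
    (h : IsUnit ((i + j)! : R)) :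
    (i ! : R)⁻¹ʳ * (j ! : R)⁻¹ʳ = (i + j).choose i * ((i + j)! : R)⁻¹ʳ := by
  have key : ((i + j).choose i : R) * (i ! : R) * (j ! : R) = (i + j)! := by
    rw [← Nat.cast_mul, ← Nat.cast_mul, Nat.choose_symm_add,
      Nat.add_choose_mul_factorial_mul_factorial]
  have hchoose : IsUnit ((i + j).choose i : R) := by
    rw [← key, mul_assoc] at h
    exact isUnit_of_mul_isUnit_left h
  rw [← key, mul_assoc, Ring.mul_inverse_rev, Ring.mul_inverse_rev, mul_left_comm,
    Ring.mul_inverse_cancel _ hchoose, mul_one, mul_comm]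

theorem PadicInt.isUnit_factorial {p : ℕ} [Fact p.Prime] {k : ℕ} (hk : k < p) :
    IsUnit (k ! : ℤ_[p]) :=
  isUnit_iff.mpr (norm_natCast_eq_one_iff.mpr ((Fact.out : p.Prime).coprime_factorial_of_lt hk))

theorem Polynomial.aeval_eq_of_X_pow_dvd_sub {R A : Type*} [CommRing R] [Ring A] [Algebra R A]
    {n : ℕ} {x : A} (hx : x ^ n = 0) {f g : R[X]} (h : X ^ n ∣ f - g) :
    aeval x f = aeval x g := by
  obtain ⟨q, hq⟩ := h
  rw [← sub_eq_zero, ← map_sub, hq, map_mul, map_pow, aeval_X, hx, zero_mul]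

section TruncatedExp

variable (R : Type*) {A B : Type*} [CommRing R] [Ring A] [Algebra R A] [Ring B] [Algebra R B]

noncomputable def truncatedExp (n : ℕ) (x : A) : A :=
  ∑ k ∈ range n, (k ! : R)⁻¹ʳ • x ^ k

variable {R}

theorem map_truncatedExp (f : A →ₐ[R] B) (n : ℕ) (x : A) :
    f (truncatedExp R n x) = truncatedExp R n (f x) := by
  simp only [truncatedExp, map_sum, map_smul, map_pow]

theorem truncatedExp_zero {n : ℕ} (hn : 0 < n) : truncatedExp R n (0 : A) = 1 := by
  rw [truncatedExp, ← Nat.succ_pred_eq_of_pos hn, sum_range_succ']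
  simp

theorem coeff_truncatedExp_C_mul_X {n d : ℕ} (hd : d < n) (a : R) :
    (truncatedExp R n (C a * X)).coeff d = (d ! : R)⁻¹ʳ * a ^ d := by
  simp only [truncatedExp, finsetSum_coeff, mul_pow, ← C_pow, coeff_smul,
    coeff_C_mul_X_pow, smul_eq_mul, mul_ite, mul_zero]
  rw [sum_ite_eq, if_pos (mem_range.mpr hd)]

theorem X_pow_dvd_truncatedExp_mul_sub {n : ℕ} (hR : ∀ k < n, IsUnit (k ! : R)) (a b : R) :
    X ^ n ∣ truncatedExp R n (C a * X) * truncatedExp R n (C b * X)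
      - truncatedExp R n (C (a + b) * X) := by
  rw [X_pow_dvd_iff]
  intro d hd
  rw [coeff_sub, sub_eq_zero, coeff_mul, coeff_truncatedExp_C_mul_X hd,
    (Commute.all a b).add_pow', mul_sum]
  refine sum_congr rfl fun ⟨i, j⟩ hij => ?_
  rw [HasAntidiagonal.mem_antidiagonal] at hij
  subst hij
  dsimp only
  rw [coeff_truncatedExp_C_mul_X (by omega), coeff_truncatedExp_C_mul_X (by omega),
    nsmul_eq_mul]
  linear_combination (a ^ i * b ^ j) * Ring.inverse_factorial_mul_inverse_factorial (hR _ hd)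

variable {n : ℕ} (hR : ∀ k < n, IsUnit (k ! : R)) {x : A} (hx : x ^ n = 0)
include hR hx

theorem truncatedExp_smul_mul_truncatedExp_smul (a b : R) :
    truncatedExp R n (a • x) * truncatedExp R n (b • x) = truncatedExp R n ((a + b) • x) := by
  have hC (c : R) : aeval x (C c * X) = c • x := by
    rw [map_mul, aeval_C, aeval_X, Algebra.smul_def]
  simp only [← hC, ← map_truncatedExp, ← map_mul]
  exact aeval_eq_of_X_pow_dvd_sub hx (X_pow_dvd_truncatedExp_mul_sub hR a b)

theorem truncatedExp_mul_truncatedExp_neg (hn : 0 < n) :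
    truncatedExp R n x * truncatedExp R n (-x) = 1 := by
  simpa [truncatedExp_zero hn] using truncatedExp_smul_mul_truncatedExp_smul hR hx (1 : R) (-1)

theorem truncatedExp_natCast_smul (hn : 0 < n) (m : ℕ) :
    truncatedExp R n ((m : R) • x) = truncatedExp R n x ^ m := by
  induction m with
  | zero => simp [truncatedExp_zero hn]
  | succ m ih =>
    have step := truncatedExp_smul_mul_truncatedExp_smul hR hx (m : R) 1
    rw [one_smul] at step
    rw [pow_succ, ← ih, step, Nat.cast_succ]

end TruncatedExp

theorem truncExp_eq_truncatedExp (p : ℕ) [Fact p.Prime] {N : ℕ}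
    (M : Matrix (Fin N) (Fin N) ℤ_[p]) : truncExp p M = truncatedExp ℤ_[p] p M :=
  rfl

theorem truncExp_inv_and_pow_general (p : ℕ) [Fact p.Prime] (N : ℕ)
    (β : Matrix (Fin N) (Fin N) ℤ_[p]) (hβ : β ^ p = 0) :
    truncExp p β * truncExp p (-β) = 1 ∧
    ∀ m : ℕ, truncExp p ((m : ℤ_[p]) • β) = truncExp p β ^ m := by
  have hunit : ∀ k < p, IsUnit (k ! : ℤ_[p]) := fun _ => PadicInt.isUnit_factorial
  have hp : 0 < p := (Fact.out : p.Prime).pos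
  simp only [truncExp_eq_truncatedExp]
  exact ⟨truncatedExp_mul_truncatedExp_neg hunit hβ hp, truncatedExp_natCast_smul hunit hβ hp⟩

/-- If `β^p = 0` then `E_p(β)·E_p(-β) = 1` and `E_p(m·β) = E_p(β)^m` for all `m : ℕ`. -/
theorem truncExp_inv_and_pow (p : ℕ) [Fact p.Prime] (N : ℕ) (hN : 1 ≤ N)
    (β : Matrix (Fin N) (Fin N) ℤ_[p]) (hβ : β ^ p = 0) :
    truncExp p β * truncExp p (-β) = 1 ∧
    ∀ m : ℕ, truncExp p ((m : ℤ_[p]) • β) = truncExp p β ^ m :=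
  truncExp_inv_and_pow_general p N β hβ
end
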